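/- arXiv:0907.3321 — 2 statements merged into one kernel-verified Lean document; each statement's English description precedes it below -/
import Mathlib

section
/- Fix 0 < α < 1 and Δ ≥ 0, and define f_Δ : ℝ → ℝ by f_Δ(x) = x^{-α}|log x|^Δ for x ∈ (0, 1/e) and f_Δ(x) = 0 otherwise. Then f_Δ ∈ L^p(ℝ) for all p ∈ [1, 1/α), and there exist constants 0 < c ≤ C (depending on α, Δ) such that c (1/α - p)^{-Δ-α} ≤ ‖f_Δ‖_p ≤ C (1/α - p)^{-Δ-α} for all p in a left neighbourhood of 1/α. -/
/-!
Substituting `x = e^{-y}` and then `y = z / u` with `u = 1 - α p` gives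
`∫ |f_Δ|^p = u^{-(Δp+1)} ∫_u^∞ e^{-z} z^{Δp} dz`, and the last integral lies between `e⁻¹` and
`Γ(Δp+1)`, which is bounded for `p ∈ [1, 1/α)` by compactness. Taking `p`-th roots,
`u^{-(Δ+1/p)} = u^{-(Δ+α)} u^{-u/p}` because `1/p - α = u/p`, and `1 ≤ u^{-u/p} ≤ e` since
`-u log u ≤ 1`. Finally `u = α (1/α - p)`.
-/

open MeasureTheory Real Set Filter

noncomputable def fDelta (α Δ : ℝ) (x : ℝ) : ℝ :=
  if x ∈ Set.Ioo 0 (Real.exp 1)⁻¹ then x ^ (-α) * |Real.log x| ^ Δ else 0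

section ExpNegSubstitution

lemma image_exp_neg_Ioi_one : (fun y ↦ exp (-y)) '' Ioi 1 = Ioo 0 (exp 1)⁻¹ := by
  ext x
  constructor
  · rintro ⟨y, hy, rfl⟩
    exact ⟨exp_pos _, by rw [← exp_neg, exp_lt_exp]; simpa using hy⟩
  · rintro ⟨hx0, hx1⟩
    refine ⟨-log x, ?_, by simp [exp_log hx0]⟩
    rw [mem_Ioi, lt_neg, ← log_exp (-1), exp_neg]
    exact log_lt_log hx0 hx1

lemma hasDerivWithinAt_exp_neg (s : Set ℝ) (y : ℝ) :
    HasDerivWithinAt (fun y ↦ exp (-y)) (-exp (-y)) s y := by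
  simpa using ((hasDerivAt_neg y).exp).hasDerivWithinAt

lemma injOn_exp_neg (s : Set ℝ) : InjOn (fun y ↦ exp (-y)) s :=
  fun _ _ _ _ h ↦ neg_injective (exp_injective h)

variable {E : Type*} [NormedAddCommGroup E] [NormedSpace ℝ E]

lemma integrableOn_Ioo_exp_neg_one_iff (g : ℝ → E) :
    IntegrableOn g (Ioo 0 (exp 1)⁻¹) ↔
      IntegrableOn (fun y ↦ exp (-y) • g (exp (-y))) (Ioi 1) := by
  simpa [← image_exp_neg_Ioi_one] using integrableOn_image_iff_integrableOn_abs_deriv_smul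
    measurableSet_Ioi (fun y _ ↦ hasDerivWithinAt_exp_neg _ y) (injOn_exp_neg _) g

lemma integral_Ioo_exp_neg_one (g : ℝ → E) :
    ∫ x in Ioo 0 (exp 1)⁻¹, g x = ∫ y in Ioi 1, exp (-y) • g (exp (-y)) := by
  simpa [← image_exp_neg_Ioi_one] using integral_image_eq_integral_abs_deriv_smul
    measurableSet_Ioi (fun y _ ↦ hasDerivWithinAt_exp_neg _ y) (injOn_exp_neg _) g

end ExpNegSubstitution

lemma integrableOn_Ioi_exp_neg_mul_mul_rpow {u D : ℝ} (hu : 0 < u) (hD : -1 < D) :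
    IntegrableOn (fun y ↦ exp (-(u * y)) * y ^ D) (Ioi 0) := by
  simpa [rpow_one, mul_comm] using integrableOn_rpow_mul_exp_neg_mul_rpow hD one_pos hu

lemma integral_Ioi_one_exp_neg_mul_mul_rpow {u : ℝ} (hu : 0 < u) (D : ℝ) :
    ∫ y in Ioi 1, exp (-(u * y)) * y ^ D = u ^ (-(D + 1)) * ∫ z in Ioi u, exp (-z) * z ^ D := by
  have hscale := integral_comp_mul_left_Ioi (fun z ↦ exp (-z) * z ^ D) 1 hu
  rw [mul_one, smul_eq_mul] at hscale
  have hpow : ∀ y ∈ Ioi (1 : ℝ),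
      exp (-(u * y)) * y ^ D = u ^ (-D) * (exp (-(u * y)) * (u * y) ^ D) := by
    intro y hy
    rw [mul_rpow hu.le (zero_le_one.trans hy.le), rpow_neg hu.le]
    field_simp
  rw [setIntegral_congr_fun measurableSet_Ioi hpow, integral_const_mul, hscale, ← mul_assoc,
    neg_add, rpow_add hu, rpow_neg_one]

lemma integrableOn_Ioi_exp_neg_mul_rpow {D : ℝ} (hD : -1 < D) :
    IntegrableOn (fun z ↦ exp (-z) * z ^ D) (Ioi 0) := by
  simpa using GammaIntegral_convergent (s := D + 1) (by linarith)

lemma integral_Ioi_exp_neg_mul_rpow_nonneg {u : ℝ} (hu : 0 ≤ u) (D : ℝ) :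
    0 ≤ ∫ z in Ioi u, exp (-z) * z ^ D :=
  setIntegral_nonneg measurableSet_Ioi fun _ hz ↦
    mul_nonneg (exp_pos _).le (rpow_nonneg (hu.trans (le_of_lt hz)) _)

lemma integral_Ioi_exp_neg_mul_rpow_le_Gamma {u D : ℝ} (hu : 0 ≤ u) (hD : -1 < D) :
    ∫ z in Ioi u, exp (-z) * z ^ D ≤ Gamma (D + 1) := by
  rw [Gamma_eq_integral (by linarith), add_sub_cancel_right]
  have hint := integrableOn_Ioi_exp_neg_mul_rpow hD
  refine setIntegral_mono_set hint ?_ (Ioi_subset_Ioi hu).eventuallyLE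
  filter_upwards [ae_restrict_mem measurableSet_Ioi] with z hz
  exact mul_nonneg (exp_pos _).le (rpow_nonneg (le_of_lt hz) _)

lemma exp_neg_one_le_integral_Ioi_exp_neg_mul_rpow {u D : ℝ} (hu0 : 0 ≤ u) (hu1 : u ≤ 1)
    (hD : 0 ≤ D) :
    exp (-1) ≤ ∫ z in Ioi u, exp (-z) * z ^ D := by
  have hint := integrableOn_Ioi_exp_neg_mul_rpow (show -1 < D by linarith)
  calc exp (-1) = ∫ z in Ioi 1, exp (-z) := (integral_exp_neg_Ioi 1).symm
    _ ≤ ∫ z in Ioi 1, exp (-z) * z ^ D := by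
      refine setIntegral_mono_on (integrableOn_exp_neg_Ioi 1)
        (hint.mono_set (Ioi_subset_Ioi zero_le_one)) measurableSet_Ioi fun z hz ↦ ?_
      exact le_mul_of_one_le_right (exp_pos _).le (one_le_rpow (le_of_lt hz) hD)
    _ ≤ ∫ z in Ioi u, exp (-z) * z ^ D := by
      refine setIntegral_mono_set (hint.mono_set (Ioi_subset_Ioi hu0)) ?_
        (Ioi_subset_Ioi hu1).eventuallyLE
      filter_upwards [ae_restrict_mem measurableSet_Ioi] with z hz
      exact mul_nonneg (exp_pos _).le (rpow_nonneg (hu0.trans (le_of_lt hz)) _)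

lemma exists_Gamma_le_of_mem_Icc (X : ℝ) : ∃ K, ∀ x ∈ Icc 1 X, Gamma x ≤ K := by
  have hcont : ContinuousOn Gamma (Icc 1 X) := fun x hx ↦
    (differentiableAt_Gamma fun m hm ↦ by
      linarith [hx.1, (Nat.cast_nonneg m : (0 : ℝ) ≤ m)]).continuousAt.continuousWithinAt
  obtain ⟨K, hK⟩ := isCompact_Icc.exists_bound_of_continuousOn hcont
  exact ⟨K, fun x hx ↦ (le_abs_self _).trans (hK x hx)⟩

lemma one_le_rpow_neg_mul_self {u s : ℝ} (hu0 : 0 < u) (hu1 : u ≤ 1) (hs : 0 ≤ s) :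
    1 ≤ u ^ (-(u * s)) :=
  one_le_rpow_of_pos_of_le_one_of_nonpos hu0 hu1 (by nlinarith)

lemma rpow_neg_mul_self_le_exp {u s : ℝ} (hu : 0 < u) (hs : 0 ≤ s) :
    u ^ (-(u * s)) ≤ exp s := by
  have hlog : u * -log u ≤ 1 := by
    have := log_le_sub_one_of_pos (inv_pos.mpr hu)
    rw [log_inv] at this
    calc u * -log u ≤ u * u⁻¹ := by gcongr; linarith
      _ = 1 := mul_inv_cancel₀ hu.ne'
  rw [rpow_def_of_pos hu, exp_le_exp]
  calc log u * -(u * s) = s * (u * -log u) := by ring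
    _ ≤ s := mul_le_of_le_one_right hs hlog

lemma exp_neg_mul_rpow_mul_abs_log_rpow (a D : ℝ) {y : ℝ} (hy : 0 ≤ y) :
    exp (-y) * (exp (-y) ^ (-a) * |log (exp (-y))| ^ D) = exp (-((1 - a) * y)) * y ^ D := by
  rw [log_exp, abs_neg, abs_of_nonneg hy, ← exp_mul, ← mul_assoc, ← exp_add]
  ring_nf

lemma fDelta_eq_indicator (a D : ℝ) :
    fDelta a D = (Ioo 0 (exp 1)⁻¹).indicator fun x ↦ x ^ (-a) * |log x| ^ D := by
  ext x
  simp only [fDelta, indicator]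

lemma measurable_fDelta (a D : ℝ) : Measurable (fDelta a D) := by
  rw [fDelta_eq_indicator]
  exact (by fun_prop : Measurable fun x : ℝ ↦ x ^ (-a) * |log x| ^ D).indicator
    measurableSet_Ioo

lemma fDelta_nonneg (a D x : ℝ) : 0 ≤ fDelta a D x := by
  unfold fDelta
  split_ifs with hx
  · exact mul_nonneg (rpow_nonneg hx.1.le _) (rpow_nonneg (abs_nonneg _) _)
  · exact le_rfl

lemma abs_fDelta_rpow {p : ℝ} (hp : 0 < p) (a D x : ℝ) :
    |fDelta a D x| ^ p = fDelta (a * p) (D * p) x := by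
  rw [abs_of_nonneg (fDelta_nonneg a D x)]
  unfold fDelta
  split_ifs with hx
  · rw [mul_rpow (rpow_nonneg hx.1.le _) (rpow_nonneg (abs_nonneg _) _), ← rpow_mul hx.1.le,
      ← rpow_mul (abs_nonneg _), neg_mul]
  · exact zero_rpow hp.ne'

lemma integrable_fDelta {a D : ℝ} (ha : a < 1) (hD : -1 < D) : Integrable (fDelta a D) := by
  rw [fDelta_eq_indicator, integrable_indicator_iff measurableSet_Ioo,
    integrableOn_Ioo_exp_neg_one_iff]
  refine ((integrableOn_Ioi_exp_neg_mul_mul_rpow (sub_pos.mpr ha) hD).mono_set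
    (Ioi_subset_Ioi zero_le_one)).congr_fun (fun y hy ↦ ?_) measurableSet_Ioi
  rw [smul_eq_mul, exp_neg_mul_rpow_mul_abs_log_rpow a D (zero_le_one.trans (le_of_lt hy))]

lemma integral_fDelta {a : ℝ} (ha : a < 1) (D : ℝ) :
    ∫ x, fDelta a D x = (1 - a) ^ (-(D + 1)) * ∫ z in Ioi (1 - a), exp (-z) * z ^ D := by
  rw [fDelta_eq_indicator, integral_indicator measurableSet_Ioo, integral_Ioo_exp_neg_one,
    ← integral_Ioi_one_exp_neg_mul_mul_rpow (sub_pos.mpr ha)]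
  refine setIntegral_congr_fun measurableSet_Ioi fun y hy ↦ ?_
  rw [smul_eq_mul, exp_neg_mul_rpow_mul_abs_log_rpow a D (zero_le_one.trans (le_of_lt hy))]

lemma memLp_fDelta {a D p : ℝ} (hp : 0 < p) (hap : a * p < 1) (hDp : -1 < D * p) :
    MemLp (fDelta a D) (ENNReal.ofReal p) volume := by
  refine (integrable_norm_rpow_iff (measurable_fDelta a D).aestronglyMeasurable
    (by simpa using hp) ENNReal.ofReal_ne_top).mp ?_
  simp_rw [ENNReal.toReal_ofReal hp.le, norm_eq_abs, abs_fDelta_rpow hp]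
  exact integrable_fDelta hap hDp

/-- The factor by which `‖fDelta α Δ‖_p` differs from `(1 - α p) ^ (-(Δ + α))`, with
`u = 1 - α p`, `D = Δ p` and `s = 1 / p`. -/
noncomputable def lpNormCorrection (u D s : ℝ) : ℝ :=
  u ^ (-(u * s)) * (∫ z in Ioi u, exp (-z) * z ^ D) ^ s

lemma integral_abs_fDelta_rpow_one_div {α Δ p : ℝ} (hp : 0 < p) (hαp : α * p < 1) :
    (∫ x, |fDelta α Δ x| ^ p) ^ (1 / p) =
      (1 - α * p) ^ (-(Δ + α)) * lpNormCorrection (1 - α * p) (Δ * p) (1 / p) := by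
  have hu : 0 < 1 - α * p := sub_pos.mpr hαp
  have hI := integral_Ioi_exp_neg_mul_rpow_nonneg hu.le (Δ * p)
  have hexp : -(Δ * p + 1) * (1 / p) = -(Δ + α) + -((1 - α * p) * (1 / p)) := by
    field_simp
    ring
  simp_rw [abs_fDelta_rpow hp, integral_fDelta hαp, lpNormCorrection]
  rw [mul_rpow (rpow_nonneg hu.le _) hI, ← rpow_mul hu.le, hexp, rpow_add hu, mul_assoc]

lemma exp_neg_one_le_lpNormCorrection {u D s : ℝ} (hu0 : 0 < u) (hu1 : u ≤ 1) (hD : 0 ≤ D)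
    (hs0 : 0 ≤ s) (hs1 : s ≤ 1) : exp (-1) ≤ lpNormCorrection u D s := by
  have hI := exp_neg_one_le_integral_Ioi_exp_neg_mul_rpow hu0.le hu1 hD
  calc exp (-1) ≤ exp (-1) ^ s := by
        rw [← exp_mul]; exact exp_le_exp.mpr (by nlinarith)
    _ ≤ (∫ z in Ioi u, exp (-z) * z ^ D) ^ s := rpow_le_rpow (exp_pos _).le hI hs0
    _ ≤ lpNormCorrection u D s :=
        le_mul_of_one_le_left (rpow_nonneg ((exp_pos _).le.trans hI) _)
          (one_le_rpow_neg_mul_self hu0 hu1 hs0)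

lemma lpNormCorrection_le {u D s K : ℝ} (hu : 0 < u) (hD : -1 < D) (hK : Gamma (D + 1) ≤ K)
    (hs0 : 0 ≤ s) (hs1 : s ≤ 1) : lpNormCorrection u D s ≤ exp 1 * max K 1 := by
  have hI := integral_Ioi_exp_neg_mul_rpow_nonneg hu.le D
  refine mul_le_mul ((rpow_neg_mul_self_le_exp hu hs0).trans (exp_le_exp.mpr hs1)) ?_
    (rpow_nonneg hI _) (exp_pos _).le
  calc (∫ z in Ioi u, exp (-z) * z ^ D) ^ s ≤ max K 1 ^ s :=
        rpow_le_rpow hI ((integral_Ioi_exp_neg_mul_rpow_le_Gamma hu.le hD).trans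
          (hK.trans (le_max_left _ _))) hs0
    _ ≤ max K 1 := rpow_le_self_of_one_le (le_max_right _ _) hs1

theorem fDelta_Lp_norm_asymptotics (α Δ : ℝ) (hα : 0 < α) (hα1 : α < 1) (hΔ : 0 ≤ Δ) :
    (∀ p : ℝ, 1 ≤ p → p < 1 / α →
      MemLp (fDelta α Δ) (ENNReal.ofReal p) volume) ∧
    ∃ c C δ : ℝ, 0 < c ∧ c ≤ C ∧ 0 < δ ∧
      ∀ p : ℝ, 1 / α - δ < p → p < 1 / α →
        c * (1 / α - p) ^ (-(Δ + α)) ≤ (∫ x : ℝ, |fDelta α Δ x| ^ p) ^ (1 / p) ∧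
        (∫ x : ℝ, |fDelta α Δ x| ^ p) ^ (1 / p) ≤ C * (1 / α - p) ^ (-(Δ + α)) := by
  have hαp {p : ℝ} (hp : p < 1 / α) : α * p < 1 := by
    rwa [lt_div_iff₀ hα, mul_comm] at hp
  obtain ⟨K, hK⟩ := exists_Gamma_le_of_mem_Icc (Δ / α + 1)
  refine ⟨fun p hp1 hpα ↦ memLp_fDelta (by linarith) (hαp hpα) (by nlinarith),
    exp (-1) * α ^ (-(Δ + α)), exp 1 * max K 1 * α ^ (-(Δ + α)), 1 / α - 1,
    by positivity, ?_, by rwa [sub_pos, lt_div_iff₀ hα, one_mul], fun p hpδ hpα ↦ ?_⟩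
  · gcongr
    exact (exp_le_exp.mpr (by norm_num)).trans
      (le_mul_of_one_le_right (exp_pos _).le (le_max_right _ _))
  have hp1 : 1 < p := by linarith
  have hu : 0 < 1 - α * p := sub_pos.mpr (hαp hpα)
  have hs1 : 1 / p ≤ 1 := (div_le_one (by linarith)).mpr hp1.le
  have hΓ : Gamma (Δ * p + 1) ≤ K :=
    hK _ ⟨by nlinarith, by rw [div_eq_mul_one_div]; gcongr⟩
  have hlow : exp (-1) ≤ lpNormCorrection (1 - α * p) (Δ * p) (1 / p) :=
    exp_neg_one_le_lpNormCorrection hu (by nlinarith) (by positivity) (by positivity) hs1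
  have hup : lpNormCorrection (1 - α * p) (Δ * p) (1 / p) ≤ exp 1 * max K 1 :=
    lpNormCorrection_le hu (by nlinarith) hΓ (by positivity) hs1
  have hscale : (1 - α * p) ^ (-(Δ + α)) = α ^ (-(Δ + α)) * (1 / α - p) ^ (-(Δ + α)) := by
    rw [← mul_rpow hα.le (sub_pos.mpr hpα).le]
    field_simp
  have hpos : 0 < α ^ (-(Δ + α)) * (1 / α - p) ^ (-(Δ + α)) := by
    rw [← hscale]; positivity
  rw [integral_abs_fDelta_rpow_one_div (by linarith) (hαp hpα), hscale]
  constructor <;> nlinarith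
end

section
/- Fix 0 < α < 1 and Δ ≥ 0 and let g_Δ(x) = x^{-1}(log x)^Δ for x > e, zero otherwise. Set u_Δ = I_α g_Δ with I_α g(x) = ∫_ℝ g(y)|x-y|^{α-1} dy. Then there exist constants 0 < c ≤ C and x_0 > e such that c·x^{α-1}(log x)^{Δ+1} ≤ u_Δ(x) ≤ C·x^{α-1}(log x)^{Δ+1} for all x > x_0. -/
open MeasureTheory Real Set Filter

noncomputable def gDelta (Δ : ℝ) (x : ℝ) : ℝ :=
  if Real.exp 1 < x then x⁻¹ * (Real.log x) ^ Δ else 0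

noncomputable def riesz1 (α : ℝ) (g : ℝ → ℝ) (x : ℝ) : ℝ :=
  ∫ y : ℝ, g y * |x - y| ^ (α - 1)

/-!
For `e < y < x` the kernel satisfies `|x - y| ^ (α - 1) ≥ x ^ (α - 1)`, so
`u(x) ≥ x ^ (α - 1) ∫_e^x g = x ^ (α - 1) ((log x) ^ (Δ + 1) - 1) / (Δ + 1)`.
For the upper bound split `(e, ∞)` at `x / 2` and `2 x`. On `(e, x / 2]` the kernel is at most
`(x / 2) ^ (α - 1)` and the integral of `g` gives the main term. On `(x / 2, 2 x]` we have
`g ≤ (2 / x) (log 2x) ^ Δ`, while the kernel integrates to `O(x ^ α)`. On `(2 x, ∞)` the kernel is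
at most `(y / 2) ^ (α - 1)`, and `(log y) ^ Δ ≤ (log 2x) ^ Δ (y / 2x) ^ ε` with `ε = (1 - α) / 2`
makes the tail converge, with mass `O(x ^ (α - 1) (log x) ^ Δ)`.
-/

theorem rpow_log_le_rpow_log_mul_rpow_div {Δ ε b y : ℝ} (hΔ : 0 ≤ Δ) (hb : 1 < b)
    (hby : b ≤ y) (hΔb : Δ ≤ ε * log b) : log y ^ Δ ≤ log b ^ Δ * (y / b) ^ ε := by
  have hlb : 0 < log b := log_pos hb
  have hy : 0 < y := by linarith
  set s := log y / log b with hs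
  have hlogy : log y = log b * s := by rw [hs]; field_simp
  have hs1 : 1 ≤ s := (one_le_div hlb).2 (log_le_log (by linarith) hby)
  have hsΔ : s ^ Δ ≤ (y / b) ^ ε := by
    rw [rpow_def_of_pos (by linarith), rpow_def_of_pos (div_pos hy (by linarith)),
      log_div hy.ne' (by linarith)]
    refine exp_le_exp.2 ?_
    calc log s * Δ ≤ (s - 1) * Δ :=
          mul_le_mul_of_nonneg_right (log_le_sub_one_of_pos (by linarith)) hΔ
      _ ≤ (s - 1) * (ε * log b) := mul_le_mul_of_nonneg_left hΔb (by linarith)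
      _ = (log y - log b) * ε := by rw [hlogy]; ring
  calc log y ^ Δ = log b ^ Δ * s ^ Δ := by rw [hlogy, mul_rpow hlb.le (by linarith)]
    _ ≤ log b ^ Δ * (y / b) ^ ε := by gcongr

theorem half_rpow_sub_one {y : ℝ} (hy : 0 ≤ y) (α : ℝ) :
    (y / 2) ^ (α - 1) = 2 ^ (1 - α) * y ^ (α - 1) := by
  rw [div_rpow hy zero_le_two, div_eq_mul_inv, ← rpow_neg zero_le_two, neg_sub, mul_comm]

theorem integrableOn_of_nonneg_of_le {f g : ℝ → ℝ} {s : Set ℝ} (hs : MeasurableSet s)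
    (hf : Measurable f) (hg : IntegrableOn g s) (hf0 : ∀ y ∈ s, 0 ≤ f y)
    (hfg : ∀ y ∈ s, f y ≤ g y) : IntegrableOn f s :=
  hg.mono' hf.aestronglyMeasurable <| (ae_restrict_iff' hs).2 <| ae_of_all _ fun y hy => by
    rw [Real.norm_of_nonneg (hf0 y hy)]
    exact hfg y hy

theorem setIntegral_Ioi_eq_integral_add_integral_add {E : Type*} [NormedAddCommGroup E]
    [NormedSpace ℝ E] {f : ℝ → E} {a b c : ℝ} (hf : IntegrableOn f (Ioi a)) (hab : a ≤ b)
    (hbc : b ≤ c) :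
    ∫ y in Ioi a, f y = (∫ y in a..b, f y) + (∫ y in b..c, f y) + ∫ y in Ioi c, f y := by
  have hb := hf.mono_set (Ioi_subset_Ioi hab)
  rw [← intervalIntegral.integral_interval_add_Ioi hf hb, add_assoc,
    intervalIntegral.integral_interval_add_Ioi hb (hb.mono_set (Ioi_subset_Ioi hbc))]

section Kernel

theorem intervalIntegrable_abs_rpow {s : ℝ} (hs : -1 < s) (a b : ℝ) :
    IntervalIntegrable (fun t : ℝ => |t| ^ s) volume a b := by
  have hpos : ∀ c, 0 ≤ c → IntervalIntegrable (fun t : ℝ => |t| ^ s) volume 0 c := by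
    intro c hc
    refine (intervalIntegral.intervalIntegrable_rpow' hs).congr fun t ht => ?_
    rw [uIoc_of_le hc] at ht
    simp only [abs_of_pos ht.1]
  have hall : ∀ c, IntervalIntegrable (fun t : ℝ => |t| ^ s) volume 0 c := by
    intro c
    rcases le_total 0 c with hc | hc
    · exact hpos c hc
    · simpa using (IntervalIntegrable.iff_comp_neg (by simp)).1 (hpos (-c) (by linarith))
  exact (hall a).symm.trans (hall b)

variable {α x : ℝ}

theorem intervalIntegrable_abs_sub_rpow (hα : 0 < α) (a b : ℝ) :
    IntervalIntegrable (fun y => |x - y| ^ (α - 1)) volume a b := by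
  simpa using
    (intervalIntegrable_abs_rpow (by linarith : -1 < α - 1) (x - a) (x - b)).comp_sub_left x

theorem integral_abs_sub_rpow (hα : 0 < α) {r : ℝ} (hr : 0 ≤ r) :
    ∫ y in x - r..x + r, |x - y| ^ (α - 1) = 2 * r ^ α / α := by
  have hint := intervalIntegrable_abs_rpow (by linarith : -1 < α - 1)
  have hhalf : ∫ t in (0 : ℝ)..r, |t| ^ (α - 1) = r ^ α / α := by
    rw [intervalIntegral.integral_congr (g := fun t : ℝ => t ^ (α - 1)) fun t ht => by
        rw [uIcc_of_le hr] at ht; simp only [abs_of_nonneg ht.1],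
      integral_rpow (Or.inl (by linarith)), sub_add_cancel, zero_rpow hα.ne', sub_zero]
  rw [intervalIntegral.integral_comp_sub_left (fun t => |t| ^ (α - 1)), sub_add_cancel_left,
    sub_sub_cancel, ← intervalIntegral.integral_add_adjacent_intervals (hint _ 0) (hint 0 _),
    ← neg_zero, ← intervalIntegral.integral_comp_neg]
  simp only [abs_neg, neg_zero, hhalf]
  ring

end Kernel

section Comparison

variable {α x a b : ℝ} {g : ℝ → ℝ}

theorem rpow_mul_integral_le_integral_mul_abs_sub_rpow (hα : α ≤ 1) (ha : 0 ≤ a) (hab : a ≤ b)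
    (hbx : b ≤ x) (hg0 : ∀ y ∈ Ioo a b, 0 ≤ g y) (hg : IntervalIntegrable g volume a b)
    (hgk : IntervalIntegrable (fun y => g y * |x - y| ^ (α - 1)) volume a b) :
    x ^ (α - 1) * ∫ y in a..b, g y ≤ ∫ y in a..b, g y * |x - y| ^ (α - 1) := by
  rw [← intervalIntegral.integral_const_mul]
  refine intervalIntegral.integral_mono_on_of_le_Ioo hab (hg.const_mul _) hgk fun y hy => ?_
  rw [abs_of_pos (by linarith [hy.2]), mul_comm]
  exact mul_le_mul_of_nonneg_left
    (rpow_le_rpow_of_nonpos (by linarith [hy.2]) (by linarith [hy.1]) (by linarith)) (hg0 y hy)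

theorem integral_mul_abs_sub_rpow_le_of_lt (hα : α ≤ 1) (hab : a ≤ b) (hbx : b < x)
    (hg0 : ∀ y ∈ Ioc a b, 0 ≤ g y) (hg : IntervalIntegrable g volume a b) :
    ∫ y in a..b, g y * |x - y| ^ (α - 1) ≤ (x - b) ^ (α - 1) * ∫ y in a..b, g y := by
  rw [← intervalIntegral.integral_const_mul, intervalIntegral.integral_of_le hab,
    intervalIntegral.integral_of_le hab]
  refine setIntegral_mono_of_nonneg (fun y hy => mul_nonneg (hg0 y hy) (by positivity))
    (fun y hy => ?_) (hg.const_mul _).1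
  rw [abs_of_pos (by linarith [hy.2]), mul_comm]
  exact mul_le_mul_of_nonneg_right
    (rpow_le_rpow_of_nonpos (by linarith) (by linarith [hy.2]) (by linarith)) (hg0 y hy)

theorem integral_mul_abs_sub_rpow_le_of_bounded (hα : 0 < α) (hab : a ≤ b) {r M : ℝ}
    (har : x - r ≤ a) (hbr : b ≤ x + r) (hM : 0 ≤ M) (hg0 : ∀ y ∈ Ioc a b, 0 ≤ g y)
    (hgM : ∀ y ∈ Ioc a b, g y ≤ M) :
    ∫ y in a..b, g y * |x - y| ^ (α - 1) ≤ M * (2 * r ^ α / α) := by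
  have hk := intervalIntegrable_abs_sub_rpow (x := x) hα
  calc ∫ y in a..b, g y * |x - y| ^ (α - 1) ≤ ∫ y in a..b, M * |x - y| ^ (α - 1) := by
        rw [intervalIntegral.integral_of_le hab, intervalIntegral.integral_of_le hab]
        exact setIntegral_mono_of_nonneg (fun y hy => mul_nonneg (hg0 y hy) (by positivity))
          (fun y hy => by gcongr; exact hgM y hy) ((hk a b).const_mul M).1
    _ = M * ∫ y in a..b, |x - y| ^ (α - 1) := intervalIntegral.integral_const_mul _ _
    _ ≤ M * ∫ y in x - r..x + r, |x - y| ^ (α - 1) := by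
        gcongr
        exact intervalIntegral.integral_mono_interval har hab hbr
          (ae_of_all _ fun y => by positivity) (hk _ _)
    _ = M * (2 * r ^ α / α) := by rw [integral_abs_sub_rpow hα (by linarith)]

end Comparison

section gDelta

variable {Δ : ℝ}

theorem gDelta_of_exp_one_lt {y : ℝ} (hy : exp 1 < y) : gDelta Δ y = y⁻¹ * log y ^ Δ :=
  if_pos hy

theorem gDelta_of_le_exp_one {y : ℝ} (hy : y ≤ exp 1) : gDelta Δ y = 0 :=
  if_neg hy.not_gt

theorem gDelta_nonneg (y : ℝ) : 0 ≤ gDelta Δ y := by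
  unfold gDelta
  split_ifs with hy
  · have hy0 : 0 < y := (exp_pos 1).trans hy
    have hlog : 0 < log y := log_pos (by linarith [add_one_le_exp 1])
    positivity
  · exact le_rfl

@[fun_prop]
theorem measurable_gDelta : Measurable (gDelta Δ) :=
  Measurable.ite measurableSet_Ioi (by fun_prop) measurable_const

theorem gDelta_le_inv_mul_rpow_log (hΔ : 0 ≤ Δ) {a b y : ℝ} (ha : 0 < a) (hb : 1 ≤ b)
    (hay : a ≤ y) (hyb : y ≤ b) : gDelta Δ y ≤ a⁻¹ * log b ^ Δ := by
  rcases le_or_gt y (exp 1) with hy | hy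
  · rw [gDelta_of_le_exp_one hy]
    have := log_nonneg hb
    positivity
  · have hy1 : 1 ≤ y := by linarith [add_one_le_exp 1]
    rw [gDelta_of_exp_one_lt hy]
    have := log_nonneg hy1
    gcongr

theorem intervalIntegrable_gDelta {a b : ℝ} (ha : exp 1 ≤ a) (hab : a ≤ b) :
    IntervalIntegrable (gDelta Δ) volume a b := by
  have hcont : ContinuousOn (fun y => y⁻¹ * log y ^ Δ) (uIcc a b) := by
    refine continuousOn_of_forall_continuousAt fun y hy => ?_
    rw [uIcc_of_le hab] at hy
    have hy1 : 1 < y := by linarith [add_one_le_exp 1, hy.1]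
    have hy0 : y ≠ 0 := by positivity
    have hlog : log y ≠ 0 := (log_pos hy1).ne'
    exact (continuousAt_inv₀ hy0).mul ((continuousAt_log hy0).rpow_const (Or.inl hlog))
  exact hcont.intervalIntegrable.congr fun y hy =>
    (gDelta_of_exp_one_lt (ha.trans_lt (uIoc_of_le hab ▸ hy).1)).symm

theorem integral_gDelta {a b : ℝ} (hΔ : Δ ≠ -1) (ha : exp 1 ≤ a) (hab : a ≤ b) :
    ∫ y in a..b, gDelta Δ y = (log b ^ (Δ + 1) - log a ^ (Δ + 1)) / (Δ + 1) := by
  have hΔ1 : Δ + 1 ≠ 0 := fun h => hΔ (by linarith)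
  have hlog : ∀ y, a ≤ y → 0 < log y := fun y hy => log_pos (by linarith [add_one_le_exp 1])
  have hcont : ContinuousOn (fun y => log y ^ (Δ + 1) / (Δ + 1)) (Icc a b) := by
    refine continuousOn_of_forall_continuousAt fun y hy => ?_
    have hy0 : y ≠ 0 := (lt_of_lt_of_le (exp_pos 1) (ha.trans hy.1)).ne'
    exact ((continuousAt_log hy0).rpow_const (Or.inl (hlog y hy.1).ne')).div_const _
  have hderiv : ∀ y ∈ Ioo a b,
      HasDerivAt (fun y => log y ^ (Δ + 1) / (Δ + 1)) (gDelta Δ y) y := by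
    intro y hy
    have hy0 : y ≠ 0 := (lt_of_lt_of_le (exp_pos 1) (ha.trans hy.1.le)).ne'
    rw [gDelta_of_exp_one_lt (ha.trans_lt hy.1)]
    refine (((hasDerivAt_log hy0).rpow_const (Or.inl (hlog y hy.1.le).ne')).div_const
      (Δ + 1)).congr_deriv ?_
    rw [add_sub_cancel_right]
    field_simp
  rw [intervalIntegral.integral_eq_sub_of_hasDerivAt_of_le hab hcont hderiv
    (intervalIntegrable_gDelta ha hab), sub_div]

end gDelta

section Tail

variable {α Δ ε x b : ℝ}

theorem gDelta_mul_abs_sub_rpow_le (hα : α ≤ 1) (hΔ : 0 ≤ Δ) (hb : 1 < b)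
    (hΔb : Δ ≤ ε * log b) {y : ℝ} (hby : b ≤ y) (hxy : 2 * x ≤ y) :
    gDelta Δ y * |x - y| ^ (α - 1) ≤ 2 ^ (1 - α) * log b ^ Δ * b ^ (-ε) * y ^ (α + ε - 2) := by
  have hy : 0 < y := by linarith
  have hlogb : 0 ≤ log b ^ Δ := rpow_nonneg (log_pos hb).le _
  rcases le_or_gt y (exp 1) with hye | hye
  · rw [gDelta_of_le_exp_one hye, zero_mul]
    positivity
  rw [gDelta_of_exp_one_lt hye]
  have hlogy : 0 ≤ log y ^ Δ := rpow_nonneg (log_nonneg (by linarith)) _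
  have hkernel : |x - y| ^ (α - 1) ≤ 2 ^ (1 - α) * y ^ (α - 1) := by
    calc |x - y| ^ (α - 1) ≤ (y / 2) ^ (α - 1) :=
          rpow_le_rpow_of_nonpos (by positivity)
            (by rw [abs_sub_comm]; exact le_abs.2 (Or.inl (by linarith))) (by linarith)
      _ = 2 ^ (1 - α) * y ^ (α - 1) := half_rpow_sub_one hy.le α
  calc y⁻¹ * log y ^ Δ * |x - y| ^ (α - 1)
      ≤ y⁻¹ * (log b ^ Δ * (y / b) ^ ε) * (2 ^ (1 - α) * y ^ (α - 1)) := by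
        gcongr
        exact rpow_log_le_rpow_log_mul_rpow_div hΔ hb hby hΔb
    _ = 2 ^ (1 - α) * log b ^ Δ * b ^ (-ε) * (y ^ (-1 : ℝ) * y ^ ε * y ^ (α - 1)) := by
        rw [div_rpow hy.le (by linarith), rpow_neg (by linarith), rpow_neg_one]
        ring
    _ = 2 ^ (1 - α) * log b ^ Δ * b ^ (-ε) * y ^ (α + ε - 2) := by
        rw [← rpow_add hy, ← rpow_add hy]
        ring_nf

theorem integrableOn_Ioi_gDelta_mul_abs_sub_rpow (hαε : α + ε < 1) (hΔ : 0 ≤ Δ) (hb : 1 < b)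
    (hΔb : Δ ≤ ε * log b) (hxb : 2 * x ≤ b) :
    IntegrableOn (fun y => gDelta Δ y * |x - y| ^ (α - 1)) (Ioi b) := by
  have hε : 0 ≤ ε := nonneg_of_mul_nonneg_left (hΔ.trans hΔb) (log_pos hb)
  refine integrableOn_of_nonneg_of_le measurableSet_Ioi (by fun_prop)
    ((integrableOn_Ioi_rpow_of_lt (a := α + ε - 2) (by linarith) (by linarith)).const_mul
      (2 ^ (1 - α) * log b ^ Δ * b ^ (-ε)))
    (fun y _ => mul_nonneg (gDelta_nonneg y) (by positivity)) fun y hy =>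
      gDelta_mul_abs_sub_rpow_le (by linarith) hΔ hb hΔb hy.le (by linarith [mem_Ioi.1 hy])

theorem setIntegral_Ioi_gDelta_mul_abs_sub_rpow_le (hαε : α + ε < 1) (hΔ : 0 ≤ Δ) (hb : 1 < b)
    (hΔb : Δ ≤ ε * log b) (hxb : 2 * x ≤ b) :
    ∫ y in Ioi b, gDelta Δ y * |x - y| ^ (α - 1)
      ≤ 2 ^ (1 - α) * log b ^ Δ * b ^ (α - 1) / (1 - α - ε) := by
  have hε : 0 ≤ ε := nonneg_of_mul_nonneg_left (hΔ.trans hΔb) (log_pos hb)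
  have hexp : α + ε - 2 < -1 := by linarith
  have hb0 : 0 < b := by linarith
  calc ∫ y in Ioi b, gDelta Δ y * |x - y| ^ (α - 1)
      ≤ ∫ y in Ioi b, 2 ^ (1 - α) * log b ^ Δ * b ^ (-ε) * y ^ (α + ε - 2) :=
        setIntegral_mono_of_nonneg (fun y _ => mul_nonneg (gDelta_nonneg y) (by positivity))
          (fun y hy => gDelta_mul_abs_sub_rpow_le (by linarith) hΔ hb hΔb hy.le
            (by linarith [mem_Ioi.1 hy]))
          ((integrableOn_Ioi_rpow_of_lt hexp hb0).const_mul _)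
    _ = 2 ^ (1 - α) * log b ^ Δ * b ^ (α - 1) / (1 - α - ε) := by
        have hpow : b ^ (-ε) * b ^ (α + ε - 2 + 1) = b ^ (α - 1) := by
          rw [← rpow_add hb0]; ring_nf
        rw [integral_const_mul, integral_Ioi_rpow_of_lt hexp hb0, ← hpow,
          show α + ε - 2 + 1 = -(1 - α - ε) by ring, neg_div_neg_eq]
        ring

end Tail

section Riesz

variable {α Δ x : ℝ}

theorem riesz1_gDelta_eq_setIntegral_Ioi :
    riesz1 α (gDelta Δ) x = ∫ y in Ioi (exp 1), gDelta Δ y * |x - y| ^ (α - 1) :=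
  (setIntegral_eq_integral_of_forall_compl_eq_zero fun y hy => by
    rw [gDelta_of_le_exp_one (not_lt.1 hy), zero_mul]).symm

theorem integrable_gDelta_mul_abs_sub_rpow (hα : 0 < α) (hα1 : α < 1) (hΔ : 0 ≤ Δ) (x : ℝ) :
    Integrable (fun y => gDelta Δ y * |x - y| ^ (α - 1)) := by
  set ε := (1 - α) / 2
  have hε : 0 < ε := by simp only [ε]; linarith
  set R := max (2 * x) (exp (Δ / ε + 1))
  have hlogR : Δ / ε + 1 ≤ log R := by
    rw [le_log_iff_exp_le (lt_of_lt_of_le (exp_pos _) (le_max_right _ _))]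
    exact le_max_right _ _
  have hΔR : Δ ≤ ε * log R := by
    calc Δ = ε * (Δ / ε) := by field_simp
      _ ≤ ε * log R := by gcongr; linarith
  have heR : exp 1 ≤ R :=
    (exp_le_exp.2 (by linarith [div_nonneg hΔ hε.le])).trans (le_max_right _ _)
  have hR1 : 1 < R := by linarith [add_one_le_exp 1]
  have hsupp : Function.support (fun y => gDelta Δ y * |x - y| ^ (α - 1)) ⊆ Ioi (exp 1) :=
    Function.support_subset_iff'.2 fun y hy => by
      rw [gDelta_of_le_exp_one (not_lt.1 hy), zero_mul]
  rw [← integrableOn_iff_integrable_of_support_subset hsupp, ← Ioc_union_Ioi_eq_Ioi heR]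
  refine IntegrableOn.union ?_ (integrableOn_Ioi_gDelta_mul_abs_sub_rpow
    (by simp only [ε]; linarith) hΔ hR1 hΔR (le_max_left _ _))
  refine integrableOn_of_nonneg_of_le measurableSet_Ioc (by fun_prop)
    (((intervalIntegrable_abs_sub_rpow (x := x) hα _ _).1).const_mul (log R ^ Δ))
    (fun y _ => mul_nonneg (gDelta_nonneg y) (by positivity)) fun y hy => ?_
  have hg := gDelta_le_inv_mul_rpow_log hΔ one_pos hR1.le
    (by linarith [hy.1, add_one_le_exp 1]) hy.2
  rw [inv_one, one_mul] at hg
  gcongr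

end Riesz

section Bounds

variable {α Δ x : ℝ}

theorem le_riesz1_gDelta (hα : 0 < α) (hα1 : α < 1) (hΔ : 0 ≤ Δ) (hx : exp 1 ≤ x) :
    x ^ (α - 1) * ((log x ^ (Δ + 1) - 1) / (Δ + 1)) ≤ riesz1 α (gDelta Δ) x := by
  have hf := integrable_gDelta_mul_abs_sub_rpow hα hα1 hΔ x
  calc x ^ (α - 1) * ((log x ^ (Δ + 1) - 1) / (Δ + 1))
      = x ^ (α - 1) * ∫ y in exp 1..x, gDelta Δ y := by
        rw [integral_gDelta (by linarith) le_rfl hx, log_exp, one_rpow]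
    _ ≤ ∫ y in exp 1..x, gDelta Δ y * |x - y| ^ (α - 1) :=
        rpow_mul_integral_le_integral_mul_abs_sub_rpow hα1.le (exp_pos 1).le hx le_rfl
          (fun y _ => gDelta_nonneg y) (intervalIntegrable_gDelta le_rfl hx) hf.intervalIntegrable
    _ ≤ riesz1 α (gDelta Δ) x := by
        rw [intervalIntegral.integral_of_le hx]
        exact setIntegral_le_integral hf
          (ae_of_all _ fun y => mul_nonneg (gDelta_nonneg y) (by positivity))

theorem integral_exp_one_half_gDelta_mul_abs_sub_rpow_le (hα : α ≤ 1) (hΔ : 0 ≤ Δ)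
    (hx : 2 * exp 1 ≤ x) :
    ∫ y in exp 1..x / 2, gDelta Δ y * |x - y| ^ (α - 1)
      ≤ 2 ^ (1 - α) / (Δ + 1) * x ^ (α - 1) * log (2 * x) ^ (Δ + 1) := by
  have hx0 : 0 < x := by linarith [exp_pos 1]
  have hxe : exp 1 ≤ x / 2 := by linarith
  have hlog_half : log (x / 2) ^ (Δ + 1) ≤ log (2 * x) ^ (Δ + 1) :=
    rpow_le_rpow (log_nonneg (by linarith [add_one_le_exp 1]))
      (log_le_log (by positivity) (by linarith)) (by linarith)
  calc _ ≤ (x - x / 2) ^ (α - 1) * ∫ y in exp 1..x / 2, gDelta Δ y :=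
        integral_mul_abs_sub_rpow_le_of_lt hα hxe (by linarith)
          (fun y _ => gDelta_nonneg y) (intervalIntegrable_gDelta le_rfl hxe)
    _ = 2 ^ (1 - α) / (Δ + 1) * x ^ (α - 1) * (log (x / 2) ^ (Δ + 1) - 1) := by
        rw [integral_gDelta (by linarith) le_rfl hxe, log_exp, one_rpow, sub_half,
          half_rpow_sub_one hx0.le]
        ring
    _ ≤ 2 ^ (1 - α) / (Δ + 1) * x ^ (α - 1) * log (2 * x) ^ (Δ + 1) := by
        gcongr
        linarith

theorem integral_half_two_mul_gDelta_mul_abs_sub_rpow_le (hα : 0 < α) (hΔ : 0 ≤ Δ)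
    (hx : 1 ≤ 2 * x) :
    ∫ y in x / 2..2 * x, gDelta Δ y * |x - y| ^ (α - 1)
      ≤ 4 / α * x ^ (α - 1) * log (2 * x) ^ Δ := by
  have hx0 : 0 < x := by linarith
  calc _ ≤ (x / 2)⁻¹ * log (2 * x) ^ Δ * (2 * x ^ α / α) :=
        integral_mul_abs_sub_rpow_le_of_bounded hα (by linarith) (by linarith) (by linarith)
          (mul_nonneg (by positivity) (rpow_nonneg (log_nonneg hx) _))
          (fun y _ => gDelta_nonneg y)
          fun y hy => gDelta_le_inv_mul_rpow_log hΔ (by positivity) hx hy.1.le hy.2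
    _ = 4 / α * x ^ (α - 1) * log (2 * x) ^ Δ := by
        rw [rpow_sub_one hx0.ne']
        field_simp
        ring

theorem riesz1_gDelta_le (hα : 0 < α) (hα1 : α < 1) (hΔ : 0 ≤ Δ) (hx : 2 * exp 1 ≤ x)
    (hΔx : Δ ≤ (1 - α) / 2 * log (2 * x)) :
    riesz1 α (gDelta Δ) x ≤
      (2 ^ (1 - α) / (Δ + 1) + 4 / α + 2 / (1 - α)) * x ^ (α - 1) * log (2 * x) ^ (Δ + 1) := by
  have hx4 : 4 ≤ x := by linarith [add_one_le_exp 1]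
  have hlog1 : 1 ≤ log (2 * x) := by
    rw [le_log_iff_exp_le (by positivity)]
    linarith [exp_pos 1]
  have hX : 0 ≤ x ^ (α - 1) := rpow_nonneg (by linarith) _
  have hLΔ : log (2 * x) ^ Δ ≤ log (2 * x) ^ (Δ + 1) :=
    rpow_le_rpow_of_exponent_le hlog1 (by linarith)
  have htail : ∫ y in Ioi (2 * x), gDelta Δ y * |x - y| ^ (α - 1)
      ≤ 2 / (1 - α) * x ^ (α - 1) * log (2 * x) ^ Δ := by
    have hpow : 2 ^ (1 - α) * (2 * x) ^ (α - 1) = x ^ (α - 1) := by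
      rw [← half_rpow_sub_one (by positivity), mul_div_cancel_left₀ _ two_ne_zero]
    calc _ ≤ 2 ^ (1 - α) * log (2 * x) ^ Δ * (2 * x) ^ (α - 1) / (1 - α - (1 - α) / 2) :=
          setIntegral_Ioi_gDelta_mul_abs_sub_rpow_le (by linarith) hΔ (by linarith) hΔx le_rfl
      _ = 2 / (1 - α) * x ^ (α - 1) * log (2 * x) ^ Δ := by
          rw [← hpow]
          field_simp
          ring
  rw [riesz1_gDelta_eq_setIntegral_Ioi, setIntegral_Ioi_eq_integral_add_integral_add
    (integrable_gDelta_mul_abs_sub_rpow hα hα1 hΔ x).integrableOn (by linarith : exp 1 ≤ x / 2)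
    (by linarith : x / 2 ≤ 2 * x)]
  have hmid := integral_half_two_mul_gDelta_mul_abs_sub_rpow_le hα hΔ (by linarith : 1 ≤ 2 * x)
  have hmid' := mul_le_mul_of_nonneg_left hLΔ (by positivity : 0 ≤ 4 / α * x ^ (α - 1))
  have htail' := mul_le_mul_of_nonneg_left hLΔ
    (mul_nonneg (div_nonneg zero_le_two (by linarith)) hX : 0 ≤ 2 / (1 - α) * x ^ (α - 1))
  linarith [integral_exp_one_half_gDelta_mul_abs_sub_rpow_le hα1.le hΔ hx]

theorem one_div_two_mul_le_riesz1_gDelta (hα : 0 < α) (hα1 : α < 1) (hΔ : 0 ≤ Δ)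
    (hx : exp 2 ≤ x) :
    1 / (2 * (Δ + 1)) * x ^ (α - 1) * log x ^ (Δ + 1) ≤ riesz1 α (gDelta Δ) x := by
  have hlog : 2 ≤ log x := by rwa [le_log_iff_exp_le ((exp_pos 2).trans_le hx)]
  have hL : 2 ≤ log x ^ (Δ + 1) :=
    hlog.trans (self_le_rpow_of_one_le (by linarith) (by linarith))
  have hX : 0 ≤ x ^ (α - 1) := rpow_nonneg ((exp_pos 2).trans_le hx).le _
  refine le_trans ?_ (le_riesz1_gDelta hα hα1 hΔ ((exp_le_exp.2 one_le_two).trans hx))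
  calc 1 / (2 * (Δ + 1)) * x ^ (α - 1) * log x ^ (Δ + 1)
      = x ^ (α - 1) * (log x ^ (Δ + 1) / 2) / (Δ + 1) := by field_simp
    _ ≤ x ^ (α - 1) * (log x ^ (Δ + 1) - 1) / (Δ + 1) := by gcongr; linarith
    _ = x ^ (α - 1) * ((log x ^ (Δ + 1) - 1) / (Δ + 1)) := by ring

theorem riesz1_gDelta_le_of_exp_lt (hα : 0 < α) (hα1 : α < 1) (hΔ : 0 ≤ Δ)
    (hx : exp (2 * Δ / (1 - α) + 2) < x) :
    riesz1 α (gDelta Δ) x ≤ 2 ^ (Δ + 1) * (2 ^ (1 - α) / (Δ + 1) + 4 / α + 2 / (1 - α)) *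
      x ^ (α - 1) * log x ^ (Δ + 1) := by
  have hx0 : 0 < x := (exp_pos _).trans hx
  have hlogx : 2 * Δ / (1 - α) + 2 < log x := (lt_log_iff_exp_lt hx0).2 hx
  have hδ : 0 ≤ 2 * Δ / (1 - α) := div_nonneg (by linarith) (by linarith)
  have hx2e : 2 * exp 1 ≤ x :=
    calc 2 * exp 1 ≤ exp 1 * exp 1 := by nlinarith [add_one_le_exp 1]
      _ = exp (1 + 1) := (exp_add 1 1).symm
      _ ≤ x := (exp_le_exp.2 (by linarith)).trans hx.le
  obtain ⟨hlog_le, hlog_two_mul⟩ : log x ≤ log (2 * x) ∧ log (2 * x) ≤ 2 * log x := by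
    rw [log_mul two_ne_zero hx0.ne']
    constructor <;> linarith [log_nonneg one_le_two,
      log_le_log two_pos (by linarith [add_one_le_exp 1] : (2 : ℝ) ≤ x)]
  have hΔx : Δ ≤ (1 - α) / 2 * log (2 * x) :=
    calc Δ = (1 - α) / 2 * (2 * Δ / (1 - α)) := by field_simp [(by linarith : 1 - α ≠ 0)]
      _ ≤ (1 - α) / 2 * log (2 * x) := by gcongr; linarith
  refine (riesz1_gDelta_le hα hα1 hΔ hx2e hΔx).trans ?_
  calc _ ≤ (2 ^ (1 - α) / (Δ + 1) + 4 / α + 2 / (1 - α)) * x ^ (α - 1) *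
        (2 * log x) ^ (Δ + 1) := by
        have : 0 < 1 - α := by linarith
        gcongr
        linarith
    _ = _ := by
        rw [mul_rpow zero_le_two (by linarith)]
        ring

end Bounds

theorem riesz_of_gDelta_pointwise_asymptotics
    (α Δ : ℝ) (hα : 0 < α) (hα1 : α < 1) (hΔ : 0 ≤ Δ) :
    ∃ c C x₀ : ℝ, 0 < c ∧ c ≤ C ∧ Real.exp 1 < x₀ ∧
      ∀ x : ℝ, x₀ < x →
        c * x ^ (α - 1) * (Real.log x) ^ (Δ + 1) ≤ riesz1 α (gDelta Δ) x ∧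
        riesz1 α (gDelta Δ) x ≤ C * x ^ (α - 1) * (Real.log x) ^ (Δ + 1) := by
  set x₀ := exp (2 * Δ / (1 - α) + 2)
  have hδ : 0 ≤ 2 * Δ / (1 - α) := div_nonneg (by linarith) (by linarith)
  have hexp_two : ∀ x, x₀ < x → exp 2 ≤ x := fun x hx => (exp_le_exp.2 (by linarith)).trans hx.le
  refine ⟨_, _, x₀, by positivity, ?_, exp_lt_exp.2 (by linarith), fun x hx =>
    ⟨one_div_two_mul_le_riesz1_gDelta hα hα1 hΔ (hexp_two x hx),
      riesz1_gDelta_le_of_exp_lt hα hα1 hΔ hx⟩⟩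
  -- c ≤ C since both bound the same positive quantity at x₀ + 1
  have hx₁ : 1 < x₀ + 1 := by linarith [exp_pos (2 * Δ / (1 - α) + 2)]
  refine le_of_mul_le_mul_right (a := (x₀ + 1) ^ (α - 1) * log (x₀ + 1) ^ (Δ + 1)) ?_
    (mul_pos (rpow_pos_of_pos (by linarith) _) (rpow_pos_of_pos (log_pos hx₁) _))
  simpa only [mul_assoc] using
    (one_div_two_mul_le_riesz1_gDelta hα hα1 hΔ (hexp_two _ (lt_add_one x₀))).trans
      (riesz1_gDelta_le_of_exp_lt hα hα1 hΔ (lt_add_one x₀))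
end
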